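/- For λ_1 = √3 and λ_2 = −√3 one has Re(u(√3, −√3)·v(√3, −√3)) = 1 while 1 − Re u(√3, −√3) = 3/2; hence w(√3, −√3) = 0, i.e. in the hardcore limit the density of the Fermi sea between the two impurities vanishes identically when the impurity momenta are k_{↑1} = −k_{↑2} = 2k_F/3. -/
import Mathlib


open Complex Filter

/-- `u(λ₁, λ₂)` from the hardcore-limit three-point correlator. -/
noncomputable def ufun (l1 l2 : ℝ) : ℂ :=
  ((((1 + l1 ^ 2) * (1 + l2 ^ 2)) / ((l1 - l2) ^ 2 + 4) : ℝ) : ℂ) *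
    ((Complex.I * ((l1 : ℂ) - (l2 : ℂ)) + 2) /
      ((1 + Complex.I * (l1 : ℂ)) * (1 - Complex.I * (l2 : ℂ)))) ^ 2

/-- `v(λ₁, λ₂)`: the value of the weight factor when the majority-fermion coordinate lies
strictly between the two impurity positions. -/
noncomputable def vwfun (l1 l2 : ℝ) : ℂ :=
  ((Complex.I * (l1 : ℂ) - 1) * (Complex.I * (l2 : ℂ) + 1)) /
    ((Complex.I * (l1 : ℂ) + 1) * (Complex.I * (l2 : ℂ) - 1))

/-- The weight `w(λ₁, λ₂) = (1 − Re (u·v))/(1 − Re u)`. -/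
noncomputable def wfun (l1 l2 : ℝ) : ℝ :=
  (1 - (ufun l1 l2 * vwfun l1 l2).re) / (1 - (ufun l1 l2).re)

/-- At `λ₁ = √3`, `λ₂ = −√3`: `Re(u·v) = 1`, `1 − Re u = 3/2`, hence `w(√3, −√3) = 0`;
in the hardcore limit the density of the Fermi sea between the two impurities vanishes
identically when the impurity momenta are `k_{↑1} = −k_{↑2} = 2k_F/3`. -/
theorem weight_vanishes_at_sqrt_three :
    (ufun (Real.sqrt 3) (-Real.sqrt 3) * vwfun (Real.sqrt 3) (-Real.sqrt 3)).re = 1 ∧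
    1 - (ufun (Real.sqrt 3) (-Real.sqrt 3)).re = 3 / 2 ∧
    wfun (Real.sqrt 3) (-Real.sqrt 3) = 0 := by
  set s : ℝ := Real.sqrt 3 with hsdef
  set t : ℂ := (s : ℂ) with htdef
  have hsr : s ^ 2 = 3 := by rw [hsdef, Real.sq_sqrt]; norm_num
  have ht : t ^ 2 = 3 := by rw [htdef]; exact_mod_cast hsr
  have h1 : (1 : ℂ) + Complex.I * t ≠ 0 := by
    intro h; have := congrArg Complex.re h; simp [htdef] at this
  have h2 : (1 : ℂ) - Complex.I * ((-s : ℝ) : ℂ) ≠ 0 := by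
    intro h; have := congrArg Complex.re h; simp at this
  have h3 : Complex.I * t + 1 ≠ 0 := by
    intro h; have := congrArg Complex.re h; simp [htdef] at this
  have h4 : Complex.I * ((-s : ℝ) : ℂ) - 1 ≠ 0 := by
    intro h; have := congrArg Complex.re h; simp at this
  -- real prefactor equals 1
  have h16 : (((1 + s ^ 2) * (1 + (-s) ^ 2)) / ((s - -s) ^ 2 + 4) : ℝ) = 1 := by
    have hx : (s - -s) ^ 2 = 4 * (s ^ 2) := by ring
    rw [hx, hsr]
    norm_num [hsr]
  have hr : (Complex.I * ((s : ℂ) - ((-s : ℝ) : ℂ)) + 2) /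
      ((1 + Complex.I * (s : ℂ)) * (1 - Complex.I * ((-s : ℝ) : ℂ))) = (1 - t * Complex.I) / 2 := by
    rw [div_eq_iff (mul_ne_zero h1 h2)]
    push_cast
    rw [← htdef]
    linear_combination ((Complex.I ^ 2 + Complex.I ^ 3 * t) / 2) * ht +
      ((3 + 3 * Complex.I * t) / 2) * Complex.I_sq
  have hu : ufun s (-s) = (-1 - t * Complex.I) / 2 := by
    unfold ufun
    rw [h16, hr, Complex.ofReal_one]
    linear_combination (Complex.I ^ 2 / 4) * ht + (3 / 4) * Complex.I_sq
  have hv : vwfun s (-s) = (-1 + t * Complex.I) / 2 := by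
    unfold vwfun
    rw [div_eq_iff (mul_ne_zero h3 h4)]
    push_cast
    rw [← htdef]
    linear_combination ((-Complex.I ^ 2 + Complex.I ^ 3 * t) / 2) * ht +
      ((-3 + 3 * Complex.I * t) / 2) * Complex.I_sq
  have huv : ufun s (-s) * vwfun s (-s) = 1 := by
    rw [hu, hv]
    linear_combination (-(Complex.I ^ 2) / 4) * ht + (-3 / 4) * Complex.I_sq
  have hure : (ufun s (-s)).re = -1 / 2 := by
    rw [hu, htdef]
    simp [Complex.div_re, Complex.normSq]
  refine ⟨by rw [huv]; simp, by rw [hure]; norm_num, ?_⟩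
  unfold wfun
  rw [huv, hure]
  norm_num
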